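/- arXiv:2511.07136 — 3 statements merged into one kernel-verified Lean document; each statement's English description precedes it below -/
import Mathlib

section
/- In 𝒰, let i, j ∈ I satisfy c_{ij} = −1. Then [b_{i,0}, [b_{i,0}, b_{j,s}]] = −d_i·b_{j,s} for all s ∈ ℕ, and [b_{i,2}, [b_{i,2}, b_{j,0}]] = −d_i·b_{j,4}. -/
noncomputable section

/-- Data of a symmetrizable generalized Cartan matrix `(c_{ij})` (of finite type size bounds)
together with a positive symmetrizer `(d_i)`. -/
structure CartanData (I : Type) [Fintype I] : Type where
  c : I → I → ℤ
  d : I → ℝ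
  c_diag : ∀ i, c i i = 2
  c_nonpos : ∀ i j, i ≠ j → c i j ≤ 0
  c_zero_iff : ∀ i j, c i j = 0 ↔ c j i = 0
  c_bound : ∀ i j, i ≠ j → c i j * c j i ≤ 3
  d_pos : ∀ i, 0 < d i
  d_symm : ∀ i j, d i * (c i j : ℝ) = d j * (c j i : ℝ)

/-- The pairing `(α_i, α_j) = d_i · c_{ij}`. -/
def CartanData.al {I : Type} [Fintype I] (A : CartanData I) (i j : I) : ℝ :=
  A.d i * (A.c i j : ℝ)

/-- Generators for Drinfeld-type presentations: `h i r` stands for `h_{i,2r+1}` and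
`b i r` stands for `b_{i,r}`. -/
inductive TYGen (I : Type) : Type
  | h : I → ℕ → TYGen I
  | b : I → ℕ → TYGen I

section Algebras

variable {I : Type} [Fintype I] [DecidableEq I]

/-- The element `h_{i,r}` of the free algebra, for `r : ℤ`, with the conventions
`h_{i,-1} = 1` and `h_{i,r} = 0` for `r` even or `r < -1`. -/
def TYh (i : I) (r : ℤ) : FreeAlgebra ℂ (TYGen I) :=
  if r = -1 then 1
  else if 0 ≤ r ∧ r % 2 = 1 then FreeAlgebra.ι ℂ (TYGen.h i ((r - 1) / 2).toNat)
  else 0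

/-- The generator `b_{i,r}` of the free algebra. -/
def TYb (i : I) (r : ℕ) : FreeAlgebra ℂ (TYGen I) := FreeAlgebra.ι ℂ (TYGen.b i r)

/-- The generator `h_{i,2r+1}` of the free algebra. -/
def TYhodd (i : I) (r : ℕ) : FreeAlgebra ℂ (TYGen I) := FreeAlgebra.ι ℂ (TYGen.h i r)

/-- The element `h_{i,n}` of the free algebra, `n : ℕ`, with the convention `h_{i,2r} = 0`. -/
def TYhnat (i : I) (n : ℕ) : FreeAlgebra ℂ (TYGen I) :=
  if n % 2 = 1 then FreeAlgebra.ι ℂ (TYGen.h i ((n - 1) / 2)) else 0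

/-- Defining relations of the twisted Yangian `ᵢY` in Drinfeld presentation. -/
inductive TYRel (A : CartanData I) : FreeAlgebra ℂ (TYGen I) → FreeAlgebra ℂ (TYGen I) → Prop
  | ty0 (i j : I) (r s : ℤ) : TYRel A ⁅TYh i r, TYh j s⁆ 0
  | ty1 (i j : I) (r s : ℕ) :
      TYRel A (⁅TYh i ((r : ℤ) + 1), TYb j s⁆ - ⁅TYh i ((r : ℤ) - 1), TYb j (s + 2)⁆)
        ((A.al i j : ℂ) •
            (TYh i ((r : ℤ) - 1) * TYb j (s + 1) + TYb j (s + 1) * TYh i ((r : ℤ) - 1))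
          + (((A.al i j : ℂ) ^ 2 / 4) • ⁅TYh i ((r : ℤ) - 1), TYb j s⁆))
  | ty2 (i j : I) (r s : ℕ) :
      TYRel A (⁅TYb i (r + 1), TYb j s⁆ - ⁅TYb i r, TYb j (s + 1)⁆)
        (((A.al i j : ℂ) / 2) • (TYb i r * TYb j s + TYb j s * TYb i r)
          - (if i = j then (2 : ℂ) * (-1 : ℂ) ^ s else 0) • TYh i ((r : ℤ) + (s : ℤ) + 1))
  | serre0 (i j : I) (hc : A.c i j = 0) : TYRel A ⁅TYb i 0, TYb j 0⁆ 0
  | serre1 (i j : I) (hc : A.c i j = -1) :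
      TYRel A ⁅TYb i 0, ⁅TYb i 0, TYb j 0⁆⁆ ((-(A.d i : ℂ)) • TYb j 0)
  | serre2 (i j : I) (hc : A.c i j = -2) :
      TYRel A ⁅TYb i 0, ⁅TYb i 0, ⁅TYb i 0, TYb j 0⁆⁆⁆
        (((-4 : ℂ) * (A.d i : ℂ)) • ⁅TYb i 0, TYb j 0⁆)
  | serre3 (i j : I) (hc : A.c i j = -3) :
      TYRel A ⁅TYb i 0, ⁅TYb i 0, ⁅TYb i 0, ⁅TYb i 0, TYb j 0⁆⁆⁆⁆
        (((-10 : ℂ) * (A.d i : ℂ)) • ⁅TYb i 0, ⁅TYb i 0, TYb j 0⁆⁆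
          + ((-9 : ℂ) * (A.d i : ℂ) ^ 2) • TYb j 0)

/-- The twisted Yangian `ᵢY` in Drinfeld presentation. -/
abbrev TY (A : CartanData I) : Type := RingQuot (TYRel A)

/-- The generator `h_{i,2r+1}` of the twisted Yangian `ᵢY`. -/
def tyH (A : CartanData I) (i : I) (r : ℕ) : TY A :=
  RingQuot.mkAlgHom ℂ (TYRel A) (TYhodd i r)

/-- The generator `b_{i,r}` of the twisted Yangian `ᵢY`. -/
def tyB (A : CartanData I) (i : I) (r : ℕ) : TY A :=
  RingQuot.mkAlgHom ℂ (TYRel A) (TYb i r)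

/-- Defining relations of the algebra `𝔅` (the presentation of `U(g[z]^ω̌)`). -/
inductive BRel (A : CartanData I) : FreeAlgebra ℂ (TYGen I) → FreeAlgebra ℂ (TYGen I) → Prop
  | hh (i j : I) (r s : ℕ) : BRel A ⁅TYhodd i r, TYhodd j s⁆ 0
  | hb (i j : I) (r s : ℕ) :
      BRel A ⁅TYhodd i r, TYb j s⁆ ((2 * (A.al i j : ℂ)) • TYb j (2 * r + s + 1))
  | bb (i j : I) (r s : ℕ) :
      BRel A (⁅TYb i (r + 1), TYb j s⁆ - ⁅TYb i r, TYb j (s + 1)⁆)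
        ((-(if i = j then (-1 : ℂ) ^ r + (-1 : ℂ) ^ s else 0)) • TYhnat i (r + s + 1))
  | serre0 (i j : I) (hc : A.c i j = 0) : BRel A ⁅TYb i 0, TYb j 0⁆ 0
  | serre1 (i j : I) (hc : A.c i j = -1) :
      BRel A ⁅TYb i 0, ⁅TYb i 0, TYb j 0⁆⁆ ((-(A.d i : ℂ)) • TYb j 0)
  | serre2 (i j : I) (hc : A.c i j = -2) :
      BRel A ⁅TYb i 0, ⁅TYb i 0, ⁅TYb i 0, TYb j 0⁆⁆⁆
        (((-4 : ℂ) * (A.d i : ℂ)) • ⁅TYb i 0, TYb j 0⁆)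
  | serre3 (i j : I) (hc : A.c i j = -3) :
      BRel A ⁅TYb i 0, ⁅TYb i 0, ⁅TYb i 0, ⁅TYb i 0, TYb j 0⁆⁆⁆⁆
        (((-10 : ℂ) * (A.d i : ℂ)) • ⁅TYb i 0, ⁅TYb i 0, TYb j 0⁆⁆
          + ((-9 : ℂ) * (A.d i : ℂ) ^ 2) • TYb j 0)

/-- The algebra `𝔅`. -/
abbrev BAlg (A : CartanData I) : Type := RingQuot (BRel A)

/-- The generator `h_{i,2r+1}` of `𝔅`. -/
def hB (A : CartanData I) (i : I) (r : ℕ) : BAlg A :=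
  RingQuot.mkAlgHom ℂ (BRel A) (TYhodd i r)

/-- The generator `b_{i,r}` of `𝔅`. -/
def bB (A : CartanData I) (i : I) (r : ℕ) : BAlg A :=
  RingQuot.mkAlgHom ℂ (BRel A) (TYb i r)

end Algebras

/-- Generators `h_{i,1}`, `b_{i,0}`, `b_{i,1}` for the minimalistic presentations. -/
inductive MinGen (I : Type) : Type
  | h1 : I → MinGen I
  | b0 : I → MinGen I
  | b1 : I → MinGen I

section MinAlgebras

variable {I : Type} [Fintype I] [DecidableEq I]

/-- The generator `h_{i,1}` of the free algebra. -/
def mh (i : I) : FreeAlgebra ℂ (MinGen I) := FreeAlgebra.ι ℂ (MinGen.h1 i)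

/-- The generator `b_{i,0}` of the free algebra. -/
def mb0 (i : I) : FreeAlgebra ℂ (MinGen I) := FreeAlgebra.ι ℂ (MinGen.b0 i)

/-- The generator `b_{i,1}` of the free algebra. -/
def mb1 (i : I) : FreeAlgebra ℂ (MinGen I) := FreeAlgebra.ι ℂ (MinGen.b1 i)

/-- Defining relations of the minimalistic presentation `ᵢY^min`. -/
inductive MinRel (A : CartanData I) : FreeAlgebra ℂ (MinGen I) → FreeAlgebra ℂ (MinGen I) → Prop
  | hh (i j : I) : MinRel A ⁅mh i, mh j⁆ 0
  | hb (i j : I) : MinRel A ⁅mh i, mb0 j⁆ ((2 * (A.al i j : ℂ)) • mb1 j)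
  | bb (i j : I) :
      MinRel A (⁅mb1 i, mb0 j⁆ - ⁅mb0 i, mb1 j⁆)
        (((A.al i j : ℂ) / 2) • (mb0 i * mb0 j + mb0 j * mb0 i)
          - (if i = j then (2 : ℂ) else 0) • mh i)
  | serre0 (i j : I) (hc : A.c i j = 0) : MinRel A ⁅mb0 i, mb0 j⁆ 0
  | serre1 (i j : I) (hc : A.c i j = -1) :
      MinRel A ⁅mb0 i, ⁅mb0 i, mb0 j⁆⁆ ((-(A.d i : ℂ)) • mb0 j)
  | serre2 (i j : I) (hc : A.c i j = -2) :
      MinRel A ⁅mb0 i, ⁅mb0 i, ⁅mb0 i, mb0 j⁆⁆⁆ (((-4 : ℂ) * (A.d i : ℂ)) • ⁅mb0 i, mb0 j⁆)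
  | serre3 (i j : I) (hc : A.c i j = -3) :
      MinRel A ⁅mb0 i, ⁅mb0 i, ⁅mb0 i, ⁅mb0 i, mb0 j⁆⁆⁆⁆
        (((-10 : ℂ) * (A.d i : ℂ)) • ⁅mb0 i, ⁅mb0 i, mb0 j⁆⁆
          + ((-9 : ℂ) * (A.d i : ℂ) ^ 2) • mb0 j)

/-- The relations of `ᵢY^min` together with the additional relation
`[h_{i₀,1},[b_{i₀,1},[h_{i₀,1},b_{i₀,1}]]] = (α_{i₀},α_{i₀})² [b_{i₀,1}², h_{i₀,1}]`. -/
inductive MinRelP (A : CartanData I) (i₀ : I) :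
    FreeAlgebra ℂ (MinGen I) → FreeAlgebra ℂ (MinGen I) → Prop
  | base {x y : FreeAlgebra ℂ (MinGen I)} : MinRel A x y → MinRelP A i₀ x y
  | extra : MinRelP A i₀ ⁅mh i₀, ⁅mb1 i₀, ⁅mh i₀, mb1 i₀⁆⁆⁆
      (((A.al i₀ i₀ : ℂ) ^ 2) • ⁅mb1 i₀ * mb1 i₀, mh i₀⁆)

/-- Defining relations of the algebra `𝒰`. -/
inductive URel (A : CartanData I) : FreeAlgebra ℂ (MinGen I) → FreeAlgebra ℂ (MinGen I) → Prop
  | hh (i j : I) : URel A ⁅mh i, mh j⁆ 0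
  | hb (i j : I) : URel A ⁅mh i, mb0 j⁆ ((2 * (A.al i j : ℂ)) • mb1 j)
  | bb (i j : I) :
      URel A ⁅mb1 i, mb0 j⁆ (⁅mb0 i, mb1 j⁆ - (if i = j then (2 : ℂ) else 0) • mh i)
  | serre0 (i j : I) (hc : A.c i j = 0) : URel A ⁅mb0 i, mb0 j⁆ 0
  | serre1 (i j : I) (hc : A.c i j = -1) :
      URel A ⁅mb0 i, ⁅mb0 i, mb0 j⁆⁆ ((-(A.d i : ℂ)) • mb0 j)
  | serre2 (i j : I) (hc : A.c i j = -2) :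
      URel A ⁅mb0 i, ⁅mb0 i, ⁅mb0 i, mb0 j⁆⁆⁆ (((-4 : ℂ) * (A.d i : ℂ)) • ⁅mb0 i, mb0 j⁆)
  | serre3 (i j : I) (hc : A.c i j = -3) :
      URel A ⁅mb0 i, ⁅mb0 i, ⁅mb0 i, ⁅mb0 i, mb0 j⁆⁆⁆⁆
        (((-10 : ℂ) * (A.d i : ℂ)) • ⁅mb0 i, ⁅mb0 i, mb0 j⁆⁆
          + ((-9 : ℂ) * (A.d i : ℂ) ^ 2) • mb0 j)

/-- The relations of `𝒰` together with the additional relation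
`[h_{i₀,1},[b_{i₀,1},[h_{i₀,1},b_{i₀,1}]]] = 0`. -/
inductive URelP (A : CartanData I) (i₀ : I) :
    FreeAlgebra ℂ (MinGen I) → FreeAlgebra ℂ (MinGen I) → Prop
  | base {x y : FreeAlgebra ℂ (MinGen I)} : URel A x y → URelP A i₀ x y
  | extra : URelP A i₀ ⁅mh i₀, ⁅mb1 i₀, ⁅mh i₀, mb1 i₀⁆⁆⁆ 0

/-- The algebra `𝒰`. -/
abbrev UAlg (A : CartanData I) : Type := RingQuot (URel A)

/-- The generator `h_{i,1}` of `𝒰`. -/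
def uH1 (A : CartanData I) (i : I) : UAlg A := RingQuot.mkAlgHom ℂ (URel A) (mh i)

/-- The generator `b_{i,0}` of `𝒰`. -/
def uB0 (A : CartanData I) (i : I) : UAlg A := RingQuot.mkAlgHom ℂ (URel A) (mb0 i)

/-- The generator `b_{i,1}` of `𝒰`. -/
def uB1 (A : CartanData I) (i : I) : UAlg A := RingQuot.mkAlgHom ℂ (URel A) (mb1 i)

/-- The elements `b_{i,r}` of `𝒰`, defined recursively by
`b_{i,r+1} := (2(α_i,α_i))⁻¹ [h_{i,1}, b_{i,r}]` for `r ≥ 1`. -/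
def uB (A : CartanData I) (i : I) : ℕ → UAlg A
  | 0 => uB0 A i
  | 1 => uB1 A i
  | r + 2 => (2 * (A.al i i : ℂ))⁻¹ • ⁅uH1 A i, uB A i (r + 1)⁆

/-- The elements `h_{i,r}` of `𝒰`: `h_{i,0} := 0`, `h_{i,1}` is the generator, and
`h_{i,r+1} := [b_{i,0}, b_{i,r+1}]` for `r ≥ 1`. -/
def uH (A : CartanData I) (i : I) : ℕ → UAlg A
  | 0 => 0
  | 1 => uH1 A i
  | r + 2 => ⁅uB0 A i, uB A i (r + 2)⁆

end MinAlgebras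

/-! Each `ad h_{k,1}` acts on the sequence `b_{l,•}` as a weighted shift,
`[h_{k,1}, b_{l,r}] = 2(α_k,α_l) b_{l,r+1}`. Since `c_{ij} = -1`, the combination
`H = h_i + 2 h_j` kills every `b_{i,r}` and shifts `b_{j,•}` with weight `8 d_j - 2 d_i ≠ 0`, while
`K = 2 d_j h_i + d_i h_j` kills every `b_{j,s}` and shifts `b_{i,•}`. Applying `ad H` repeatedly
carries the defining relations `[b_{i,1}, b_{j,0}] = [b_{i,0}, b_{j,1}]` and
`[b_{i,0},[b_{i,0},b_{j,0}]] = -d_i b_{j,0}` from `b_{j,0}` to every `b_{j,s}`; `ad K` then gives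
`[b_{i,r+1}, b_{j,s}] = [b_{i,r}, b_{j,s+1}]`, and applied twice to the Serre relations it gives
`[b_{i,2},[b_{i,0},b_{j,s}]] = -d_i b_{j,s+2}`, which for `s = 2` is the second identity. -/

def ShiftsBy {R L : Type*} [CommRing R] [LieRing L] [LieAlgebra R L] (D : L) (a : R)
    (x : ℕ → L) : Prop :=
  ∀ r, ⁅D, x r⁆ = a • x (r + 1)

namespace ShiftsBy

section CommRing

variable {R L : Type*} [CommRing R] [LieRing L] [LieAlgebra R L]
  {D D' z : L} {a b : R} {x y : ℕ → L}

theorem lie_eq_zero (h : ShiftsBy D (0 : R) x) (r : ℕ) : ⁅D, x r⁆ = 0 := by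
  rw [h r, zero_smul]

theorem add (h : ShiftsBy D a x) (h' : ShiftsBy D' b x) : ShiftsBy (D + D') (a + b) x :=
  fun r => by rw [add_lie, h r, h' r, add_smul]

theorem smul (h : ShiftsBy D a x) (t : R) : ShiftsBy (t • D) (t * a) x :=
  fun r => by rw [smul_lie, h r, mul_smul]

theorem tail (h : ShiftsBy D a x) : ShiftsBy D a (fun s => x (s + 1)) :=
  fun r => h (r + 1)

theorem sub (h : ShiftsBy D a x) (h' : ShiftsBy D a y) : ShiftsBy D a (x - y) :=
  fun r => by simp only [Pi.sub_apply, lie_sub, h r, h' r, smul_sub]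

theorem const_smul (h : ShiftsBy D a x) (t : R) : ShiftsBy D a (t • x) :=
  fun r => by simp only [Pi.smul_apply, lie_smul, h r, smul_comm t a]

theorem lie_left (hz : ⁅D, z⁆ = 0) (h : ShiftsBy D a y) : ShiftsBy D a (fun s => ⁅z, y s⁆) :=
  fun r => by rw [leibniz_lie, hz, zero_lie, zero_add, h r, lie_smul]

theorem lie_right (hz : ⁅D, z⁆ = 0) (h : ShiftsBy D a x) : ShiftsBy D a (fun r => ⁅x r, z⁆) :=
  fun r => by rw [leibniz_lie, hz, lie_zero, add_zero, h r, smul_lie]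

theorem lie_lie_of_kills (h : ShiftsBy D a x) (hy : ShiftsBy D (0 : R) y) (p q s : ℕ) :
    ⁅D, ⁅x p, ⁅x q, y s⁆⁆⁆ = a • (⁅x (p + 1), ⁅x q, y s⁆⁆ + ⁅x p, ⁅x (q + 1), y s⁆⁆) := by
  rw [leibniz_lie, leibniz_lie D (x q), hy.lie_eq_zero, lie_zero, add_zero, h p, h q,
    smul_lie, smul_lie, lie_smul, smul_add]

end CommRing

section Field

variable {𝕜 L : Type*} [Field 𝕜] [LieRing L] [LieAlgebra 𝕜 L] {D D' : L} {a c : 𝕜}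
  {x : ℕ → L}

theorem eq_zero (h : ShiftsBy D a x) (ha : a ≠ 0) (h0 : x 0 = 0) : ∀ r, x r = 0
  | 0 => h0
  | r + 1 => by
    have := h r
    rwa [eq_zero h ha h0 r, lie_zero, eq_comm, smul_eq_zero_iff_right ha] at this

theorem of_commute (h' : ShiftsBy D' c x) (hc : c ≠ 0) (hD : ⁅D, D'⁆ = 0)
    (h0 : ⁅D, x 0⁆ = a • x 1) : ShiftsBy D a x
  | 0 => h0
  | r + 1 => by
    have hx : x (r + 1) = c⁻¹ • ⁅D', x r⁆ := by rw [h' r, inv_smul_smul₀ hc]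
    rw [hx, lie_smul, leibniz_lie, hD, zero_lie, zero_add, of_commute h' hc hD h0 r, lie_smul,
      h' (r + 1), smul_comm a c, inv_smul_smul₀ hc]

end Field

end ShiftsBy

section SerrePropagation

variable {𝕜 L : Type*} [Field 𝕜] [LieRing L] [LieAlgebra 𝕜 L] {H K : L} {κ μ c : 𝕜}
  {x y : ℕ → L}

theorem lie_succ_eq_lie_succ (hHx : ShiftsBy H (0 : 𝕜) x) (hHy : ShiftsBy H κ y)
    (hKx : ShiftsBy K μ x) (hKy : ShiftsBy K (0 : 𝕜) y) (hκ : κ ≠ 0) (hμ : μ ≠ 0)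
    (h : ⁅x 1, y 0⁆ = ⁅x 0, y 1⁆) (r s : ℕ) : ⁅x (r + 1), y s⁆ = ⁅x r, y (s + 1)⁆ := by
  have at_zero : ∀ s, ⁅x 1, y s⁆ = ⁅x 0, y (s + 1)⁆ := by
    have := ((hHy.lie_left (hHx.lie_eq_zero 1)).sub
      (hHy.tail.lie_left (hHx.lie_eq_zero 0))).eq_zero hκ (sub_eq_zero.2 h)
    exact fun s => sub_eq_zero.1 (this s)
  have := ((hKx.tail.lie_right (hKy.lie_eq_zero s)).sub
    (hKx.lie_right (hKy.lie_eq_zero (s + 1)))).eq_zero hμ (sub_eq_zero.2 (at_zero s))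
  exact sub_eq_zero.1 (this r)

theorem lie_lie_eq_smul (hHx : ShiftsBy H (0 : 𝕜) x) (hHy : ShiftsBy H κ y) (hκ : κ ≠ 0)
    (h : ⁅x 0, ⁅x 0, y 0⁆⁆ = c • y 0) (s : ℕ) : ⁅x 0, ⁅x 0, y s⁆⁆ = c • y s := by
  have := (((hHy.lie_left (hHx.lie_eq_zero 0)).lie_left (hHx.lie_eq_zero 0)).sub
    (hHy.const_smul c)).eq_zero hκ (sub_eq_zero.2 h)
  exact sub_eq_zero.1 (this s)

theorem lie_one_lie_zero (hKx : ShiftsBy K μ x) (hKy : ShiftsBy K (0 : 𝕜) y) (hμ : μ ≠ 0)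
    (shift : ∀ s, ⁅x 1, y s⁆ = ⁅x 0, y (s + 1)⁆) (serre : ∀ s, ⁅x 0, ⁅x 0, y s⁆⁆ = c • y s)
    (s : ℕ) : ⁅x 1, ⁅x 0, y s⁆⁆ = -c • y (s + 1) := by
  have := hKx.lie_lie_of_kills hKy 0 0 s
  rw [serre s, lie_smul, hKy.lie_eq_zero, smul_zero, eq_comm, smul_eq_zero_iff_right hμ,
    shift s, serre (s + 1), add_eq_zero_iff_eq_neg] at this
  rw [this, neg_smul]

theorem lie_two_lie_zero (hKx : ShiftsBy K μ x) (hKy : ShiftsBy K (0 : 𝕜) y) (hμ : μ ≠ 0)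
    (shift : ∀ s, ⁅x 1, y s⁆ = ⁅x 0, y (s + 1)⁆)
    (lie_one : ∀ s, ⁅x 1, ⁅x 0, y s⁆⁆ = -c • y (s + 1)) (s : ℕ) :
    ⁅x 2, ⁅x 0, y s⁆⁆ = c • y (s + 2) := by
  have := hKx.lie_lie_of_kills hKy 1 0 s
  rw [lie_one s, lie_smul, hKy.lie_eq_zero, smul_zero, eq_comm, smul_eq_zero_iff_right hμ,
    shift s, lie_one (s + 1), add_eq_zero_iff_eq_neg, neg_smul, neg_neg] at this
  exact this

end SerrePropagation

namespace CartanData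

variable {I : Type} [Fintype I] (A : CartanData I) {i j : I}

theorem al_self (i : I) : A.al i i = 2 * A.d i := by
  rw [al, A.c_diag, Int.cast_ofNat, mul_comm]

theorem ne_of_c_eq_neg_one (hc : A.c i j = -1) : i ≠ j := by
  rintro rfl
  simp [A.c_diag] at hc

theorem al_of_c_eq_neg_one (hc : A.c i j = -1) : A.al i j = -A.d i := by
  simp [al, hc]

theorem al_swap_of_c_eq_neg_one (hc : A.c i j = -1) : A.al j i = -A.d i := by
  rw [al, ← A.d_symm, ← al, A.al_of_c_eq_neg_one hc]

/-- Since `c_{ji} ≥ -3`, `d_i = -d_j c_{ji} ≤ 3 d_j`. -/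
theorem d_lt_four_mul_d_of_c_eq_neg_one (hc : A.c i j = -1) : A.d i < 4 * A.d j := by
  have hji : (-3 : ℝ) ≤ A.c j i := by
    have := A.c_bound i j (A.ne_of_c_eq_neg_one hc)
    rw [hc] at this
    exact_mod_cast (by omega : (-3 : ℤ) ≤ A.c j i)
  have := A.al_swap_of_c_eq_neg_one hc
  rw [al] at this
  nlinarith [A.d_pos j]

theorem two_mul_al_self_ne_zero (i : I) : (2 * (A.al i i : ℂ)) ≠ 0 := by
  rw [A.al_self]
  exact_mod_cast (by linarith [A.d_pos i] : 2 * (2 * A.d i) ≠ 0)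

end CartanData

section UAlg

attribute [local instance] LieRing.ofAssociativeRing

theorem AlgHom.map_lie {R B C : Type*} [CommRing R] [Ring B] [Ring C] [Algebra R B]
    [Algebra R C] (f : B →ₐ[R] C) (x y : B) : f ⁅x, y⁆ = ⁅f x, f y⁆ :=
  f.toLieHom.map_lie x y

variable {I : Type} [Fintype I] [DecidableEq I] (A : CartanData I)

theorem uH1_lie_uH1 (k l : I) : ⁅uH1 A k, uH1 A l⁆ = 0 := by
  have h := RingQuot.mkAlgHom_rel ℂ (URel.hh (A := A) k l)
  rwa [AlgHom.map_lie, map_zero] at h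

theorem uH1_lie_uB_zero (k l : I) : ⁅uH1 A k, uB A l 0⁆ = (2 * (A.al k l : ℂ)) • uB A l 1 := by
  have h := RingQuot.mkAlgHom_rel ℂ (URel.hb (A := A) k l)
  rwa [AlgHom.map_lie, map_smul] at h

theorem uB_one_lie_uB_zero_of_ne {k l : I} (hkl : k ≠ l) :
    ⁅uB A k 1, uB A l 0⁆ = ⁅uB A k 0, uB A l 1⁆ := by
  have h := RingQuot.mkAlgHom_rel ℂ (URel.bb (A := A) k l)
  rwa [if_neg hkl, zero_smul, sub_zero, AlgHom.map_lie, AlgHom.map_lie] at h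

theorem uB_zero_lie_uB_zero_lie_uB_zero {k l : I} (hc : A.c k l = -1) :
    ⁅uB A k 0, ⁅uB A k 0, uB A l 0⁆⁆ = (-(A.d k : ℂ)) • uB A l 0 := by
  have h := RingQuot.mkAlgHom_rel ℂ (URel.serre1 (A := A) k l hc)
  rwa [AlgHom.map_lie, AlgHom.map_lie, map_smul] at h

theorem uB_succ (l : I) (r : ℕ) :
    uB A l (r + 1) = (2 * (A.al l l : ℂ))⁻¹ • ⁅uH1 A l, uB A l r⁆ := by
  cases r with
  | zero => rw [uH1_lie_uB_zero, inv_smul_smul₀ (A.two_mul_al_self_ne_zero l)]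
  | succ r => rfl

theorem shiftsBy_uH1_uB_self (l : I) : ShiftsBy (uH1 A l) (2 * (A.al l l : ℂ)) (uB A l) :=
  fun r => by rw [uB_succ A l r, smul_inv_smul₀ (A.two_mul_al_self_ne_zero l)]

theorem shiftsBy_uH1_uB (k l : I) : ShiftsBy (uH1 A k) (2 * (A.al k l : ℂ)) (uB A l) :=
  (shiftsBy_uH1_uB_self A l).of_commute (A.two_mul_al_self_ne_zero l) (uH1_lie_uH1 A k l)
    (uH1_lie_uB_zero A k l)

theorem shiftsBy_smul_uH1_add_smul_uH1_uB (a b : ℂ) (k k' l : I) :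
    ShiftsBy (a • uH1 A k + b • uH1 A k') (2 * (a * A.al k l + b * A.al k' l)) (uB A l) := by
  rw [mul_add, mul_left_comm, mul_left_comm 2 b]
  exact ((shiftsBy_uH1_uB A k l).smul a).add ((shiftsBy_uH1_uB A k' l).smul b)

theorem shiftsBy_uB_of_c_eq_neg_one {i j : I} (hc : A.c i j = -1) :
    ShiftsBy (uH1 A i + (2 : ℂ) • uH1 A j) (0 : ℂ) (uB A i) ∧
    ShiftsBy (uH1 A i + (2 : ℂ) • uH1 A j) (8 * A.d j - 2 * A.d i : ℂ) (uB A j) ∧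
    ShiftsBy ((2 * A.d j : ℂ) • uH1 A i + (A.d i : ℂ) • uH1 A j)
      (A.d i * (8 * A.d j - 2 * A.d i) : ℂ) (uB A i) ∧
    ShiftsBy ((2 * A.d j : ℂ) • uH1 A i + (A.d i : ℂ) • uH1 A j) (0 : ℂ) (uB A j) := by
  have shifts := shiftsBy_smul_uH1_add_smul_uH1_uB A
  refine ⟨?_, ?_, ?_, ?_⟩
  · convert shifts 1 2 i j i using 2 <;> simp [A.al_self, A.al_swap_of_c_eq_neg_one hc]
  · convert shifts 1 2 i j j using 2 <;> simp [A.al_self, A.al_of_c_eq_neg_one hc]; ring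
  · convert shifts _ _ i j i using 1; simp [A.al_self, A.al_swap_of_c_eq_neg_one hc]; ring
  · convert shifts _ _ i j j using 1; simp [A.al_self, A.al_of_c_eq_neg_one hc]; ring

end UAlg

theorem U_serre_consequences_general
    {I : Type} [Fintype I] [DecidableEq I] (A : CartanData I)
    (i j : I) (hc : A.c i j = -1) :
    (∀ s : ℕ, ⁅uB A i 0, ⁅uB A i 0, uB A j s⁆⁆ = (-(A.d i : ℂ)) • uB A j s) ∧
    ⁅uB A i 2, ⁅uB A i 2, uB A j 0⁆⁆ = (-(A.d i : ℂ)) • uB A j 4 := by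
  let _ : LieRing (UAlg A) := LieRing.ofAssociativeRing
  obtain ⟨hHx, hHy, hKx, hKy⟩ := shiftsBy_uB_of_c_eq_neg_one A hc
  have hκ : (8 * A.d j - 2 * A.d i : ℂ) ≠ 0 := by
    exact_mod_cast (by linarith [A.d_lt_four_mul_d_of_c_eq_neg_one hc] : 8 * A.d j - 2 * A.d i ≠ 0)
  have hμ : (A.d i * (8 * A.d j - 2 * A.d i) : ℂ) ≠ 0 :=
    mul_ne_zero (mod_cast (A.d_pos i).ne') hκ
  have serre := lie_lie_eq_smul hHx hHy hκ (uB_zero_lie_uB_zero_lie_uB_zero A hc)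
  have shift := lie_succ_eq_lie_succ hHx hHy hKx hKy hκ hμ
    (uB_one_lie_uB_zero_of_ne A (A.ne_of_c_eq_neg_one hc))
  refine ⟨serre, ?_⟩
  rw [shift 1 0, shift 0 1]
  exact lie_two_lie_zero hKx hKy hμ (shift 0) (lie_one_lie_zero hKx hKy hμ (shift 0) serre) 2

/-- in `𝒰`, if `c_{ij} = -1` then `[b_{i,0},[b_{i,0}, b_{j,s}]] = -d_i b_{j,s}`
for all `s`, and `[b_{i,2},[b_{i,2}, b_{j,0}]] = -d_i b_{j,4}`. -/
theorem U_serre_consequences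
    {I : Type} [Fintype I] [DecidableEq I] [Nonempty I] (A : CartanData I)
    (i j : I) (hc : A.c i j = -1) :
    (∀ s : ℕ, ⁅uB A i 0, ⁅uB A i 0, uB A j s⁆⁆ = (-(A.d i : ℂ)) • uB A j s) ∧
    ⁅uB A i 2, ⁅uB A i 2, uB A j 0⁆⁆ = (-(A.d i : ℂ)) • uB A j 4 :=
  U_serre_consequences_general A i j hc
end
end

section
/- In 𝒰, suppose i, j ∈ I satisfy [h_{i,1}, h_{i,3}] = 0 and (α_i,α_j) ≠ 0. Then [h_{j,1}, h_{j,3}] = 0, h_{j,4} = [b_{j,0}, b_{j,4}] = 0, and [b_{j,1}, b_{j,3}] = 0. -/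
/-!
Since `ad h_{k,1}` sends `b_{l,r}` to `2(α_k,α_l) b_{l,r+1}`, applying `ad h_{m,1}` to
`h_{k,3} = [b_{k,0}, b_{k,3}] = -[b_{k,1}, b_{k,2}]` shows that, when `(α_m,α_k) ≠ 0`,
`[h_{m,1}, h_{k,3}] = 0` iff `[b_{k,1}, b_{k,3}] = [b_{k,0}, b_{k,4}] = 0`.
For `k ≠ l`, positivity of `(α_k,α_k)(α_l,α_l) - (α_k,α_l)²` forces
`[b_{k,r+1}, b_{l,s}] = [b_{k,r}, b_{l,s+1}]`, and the Jacobi identity then gives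
`[h_{k,3}, b_{l,r}] = 2(α_k,α_l) b_{l,r+3}`. Hence, for `j ≠ i`, the bracket
`[h_{j,3}, h_{i,1}] = [h_{j,3}, [b_{i,0}, b_{i,1}]]`, which equals
`2(α_j,α_i)([b_{i,3}, b_{i,1}] + [b_{i,0}, b_{i,4}])`, vanishes, and the criterion with `m = i`,
then `m = j`, gives the claims for `j`.
-/

noncomputable section

theorem CartanData.al_symm {I : Type} [Fintype I] (A : CartanData I) (k l : I) :
    A.al k l = A.al l k :=
  A.d_symm k l

theorem CartanData.al_self_pos {I : Type} [Fintype I] (A : CartanData I) (k : I) :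
    0 < A.al k k := by
  simp [CartanData.al, A.c_diag k, A.d_pos k]

theorem CartanData.al_sq_lt_al_self_mul {I : Type} [Fintype I] (A : CartanData I) {k l : I}
    (hkl : k ≠ l) : A.al k l ^ 2 < A.al k k * A.al l l := by
  have hc : (A.c k l : ℝ) * A.c l k ≤ 3 := by exact_mod_cast A.c_bound k l hkl
  have hsq : A.al k l ^ 2 = A.d k * A.d l * ((A.c k l : ℝ) * A.c l k) := by
    rw [sq]
    nth_rewrite 2 [A.al_symm]
    simp only [CartanData.al]
    ring
  have hdd := mul_pos (A.d_pos k) (A.d_pos l)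
  rw [hsq]
  simp only [CartanData.al, A.c_diag]
  push_cast
  nlinarith

theorem smul_add_smul_eq_zero {K M : Type*} [Field K] [AddCommGroup M] [Module K M]
    {a b c d : K} (hdet : a * d - b * c ≠ 0) {x y : M}
    (h₁ : a • x + b • y = 0) (h₂ : c • x + d • y = 0) : x = 0 ∧ y = 0 := by
  have hx : (a * d - b * c) • x = d • (a • x + b • y) - b • (c • x + d • y) := by module
  have hy : (a * d - b * c) • y = a • (c • x + d • y) - c • (a • x + b • y) := by module
  rw [h₁, h₂, smul_zero, smul_zero, sub_zero] at hx hy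
  exact ⟨(smul_eq_zero.mp hx).resolve_left hdet, (smul_eq_zero.mp hy).resolve_left hdet⟩

section UAlg

attribute [local instance] LieRing.ofAssociativeRing

variable {I : Type} [Fintype I] [DecidableEq I] (A : CartanData I)

theorem uB_one_lie_uB_zero (k l : I) :
    ⁅uB A k 1, uB A l 0⁆ = ⁅uB A k 0, uB A l 1⁆ - (if k = l then (2 : ℂ) else 0) • uH1 A k := by
  simpa [Ring.lie_def, apply_ite (RingQuot.mkAlgHom ℂ (URel A)), uH1, uB0, uB1, uB, mh, mb0,
    mb1] using RingQuot.mkAlgHom_rel ℂ (URel.bb (A := A) k l)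

theorem uB_zero_lie_uB_one (k : I) : ⁅uB A k 0, uB A k 1⁆ = uH1 A k := by
  have h := uB_one_lie_uB_zero A k k
  rw [if_pos rfl, ← lie_skew] at h
  linear_combination (norm := module) (-1 / 2 : ℂ) • h

-- `rw [lie_smul]` fails on `UAlg A`: its `ℂ`-action is `RingQuot`'s, which is not reducibly
-- the action of the Lie module structure.
theorem UAlg.lie_smul (t : ℂ) (x y : UAlg A) : ⁅x, t • y⁆ = t • ⁅x, y⁆ := _root_.lie_smul t x y

theorem UAlg.smul_lie (t : ℂ) (x y : UAlg A) : ⁅t • x, y⁆ = t • ⁅x, y⁆ := _root_.smul_lie t x y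

omit [DecidableEq I] in
theorem two_mul_al_ne_zero {k l : I} (h : A.al k l ≠ 0) : 2 * (A.al k l : ℂ) ≠ 0 :=
  mul_ne_zero two_ne_zero (Complex.ofReal_ne_zero.mpr h)

theorem uH1_lie_uB_self (l : I) (r : ℕ) :
    ⁅uH1 A l, uB A l r⁆ = (2 * (A.al l l : ℂ)) • uB A l (r + 1) := by
  cases r with
  | zero => exact uH1_lie_uB_zero A l l
  | succ r => rw [uB, smul_inv_smul₀ (two_mul_al_ne_zero A (A.al_self_pos l).ne')]

theorem uH1_lie_uB (k l : I) (r : ℕ) :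
    ⁅uH1 A k, uB A l r⁆ = (2 * (A.al k l : ℂ)) • uB A l (r + 1) := by
  induction r with
  | zero => exact uH1_lie_uB_zero A k l
  | succ r ih =>
    refine smul_right_injective _ (two_mul_al_ne_zero A (A.al_self_pos l).ne') ?_
    calc (2 * (A.al l l : ℂ)) • ⁅uH1 A k, uB A l (r + 1)⁆
        = ⁅uH1 A k, ⁅uH1 A l, uB A l r⁆⁆ := by rw [uH1_lie_uB_self, UAlg.lie_smul]
      _ = ⁅uH1 A l, ⁅uH1 A k, uB A l r⁆⁆ := by rw [leibniz_lie, uH1_lie_uH1, zero_lie, zero_add]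
      _ = (2 * (A.al l l : ℂ)) • (2 * (A.al k l : ℂ)) • uB A l (r + 1 + 1) := by
        rw [ih, UAlg.lie_smul, uH1_lie_uB_self, smul_comm]

theorem uH1_lie_lie_uB (m k l : I) (r s : ℕ) :
    ⁅uH1 A m, ⁅uB A k r, uB A l s⁆⁆ = (2 * (A.al m k : ℂ)) • ⁅uB A k (r + 1), uB A l s⁆
      + (2 * (A.al m l : ℂ)) • ⁅uB A k r, uB A l (s + 1)⁆ := by
  rw [leibniz_lie, uH1_lie_uB, uH1_lie_uB, UAlg.smul_lie, UAlg.lie_smul]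

theorem uB_zero_lie_uB_two (k : I) : ⁅uB A k 0, uB A k 2⁆ = 0 := by
  have h := uH1_lie_lie_uB A k k k 0 1
  rw [uB_zero_lie_uB_one, lie_self, lie_self, smul_zero, zero_add, eq_comm, smul_eq_zero] at h
  exact h.resolve_left (two_mul_al_ne_zero A (A.al_self_pos k).ne')

theorem uB_zero_lie_uB_three (k : I) : ⁅uB A k 0, uB A k 3⁆ = -⁅uB A k 1, uB A k 2⁆ := by
  have h := uH1_lie_lie_uB A k k k 0 2
  rw [uB_zero_lie_uB_two, lie_zero, ← smul_add, eq_comm, smul_eq_zero] at h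
  exact eq_neg_of_add_eq_zero_right (h.resolve_left (two_mul_al_ne_zero A (A.al_self_pos k).ne'))

theorem uB_succ_lie_uB_of_ne {k l : I} (hkl : k ≠ l) (r s : ℕ) :
    ⁅uB A k (r + 1), uB A l s⁆ = ⁅uB A k r, uB A l (s + 1)⁆ := by
  set D : ℕ → ℕ → UAlg A := fun r s => ⁅uB A k (r + 1), uB A l s⁆ - ⁅uB A k r, uB A l (s + 1)⁆
    with hD
  have hlie : ∀ m r s, ⁅uH1 A m, D r s⁆
      = (2 * (A.al m k : ℂ)) • D (r + 1) s + (2 * (A.al m l : ℂ)) • D r (s + 1) := by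
    intro m r s
    simp only [hD, lie_sub, uH1_lie_lie_uB]
    module
  have hdet : (2 * (A.al k k : ℂ)) * (2 * (A.al l l : ℂ))
      - (2 * (A.al k l : ℂ)) * (2 * (A.al l k : ℂ)) ≠ 0 := by
    have hlt := A.al_sq_lt_al_self_mul hkl
    rw [← A.al_symm k l]
    exact_mod_cast (by nlinarith :
      (2 * A.al k k) * (2 * A.al l l) - (2 * A.al k l) * (2 * A.al k l) ≠ 0)
  -- `ad h_{k,1}` and `ad h_{l,1}` turn `D r s = 0` into a nondegenerate 2 × 2 system.
  have step : ∀ r s, D r s = 0 → D (r + 1) s = 0 ∧ D r (s + 1) = 0 := by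
    intro r s h
    have hk := hlie k r s
    have hl := hlie l r s
    rw [h, lie_zero] at hk hl
    exact smul_add_smul_eq_zero hdet hk.symm hl.symm
  have h00 : D 0 0 = 0 := by
    simpa [hD, if_neg hkl, sub_eq_zero] using uB_one_lie_uB_zero A k l
  suffices ∀ r s, D r s = 0 from sub_eq_zero.mp (this r s)
  intro r
  induction r with
  | zero => exact Nat.rec h00 fun s ih => (step 0 s ih).2
  | succ r ih => exact fun s => (step r s (ih s)).1

theorem uB_lie_uB_of_ne {k l : I} (hkl : k ≠ l) (r s : ℕ) :
    ⁅uB A k r, uB A l s⁆ = ⁅uB A k 0, uB A l (r + s)⁆ := by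
  induction r generalizing s with
  | zero => rw [zero_add]
  | succ r ih => rw [uB_succ_lie_uB_of_ne A hkl, ih, add_right_comm, add_assoc]

theorem lie_lie_uB_of_ne {k l : I} (hkl : k ≠ l) (p q m : ℕ) :
    ⁅⁅uB A k p, uB A k q⁆, uB A l m⁆
      = ⁅uB A k q, ⁅uB A l 0, uB A k (m + p)⁆⁆ - ⁅uB A k p, ⁅uB A l 0, uB A k (m + q)⁆⁆ := by
  have hswap : ∀ t, ⁅uB A k t, uB A l m⁆ = -⁅uB A l 0, uB A k (m + t)⁆ := fun t => by
    rw [← lie_skew, uB_lie_uB_of_ne A hkl.symm]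
  rw [lie_lie, hswap, hswap, lie_neg, lie_neg, neg_sub_neg]

theorem uH_three_lie_uB_of_ne {k l : I} (hkl : k ≠ l) (r : ℕ) :
    ⁅uH A k 3, uB A l r⁆ = (2 * (A.al k l : ℂ)) • uB A l (r + 3) := by
  have h01 := lie_lie_uB_of_ne A hkl 0 1 (r + 2)
  have h02 := lie_lie_uB_of_ne A hkl 0 2 (r + 1)
  have h12 := lie_lie_uB_of_ne A hkl 1 2 r
  rw [uB_zero_lie_uB_one, uH1_lie_uB] at h01
  rw [uB_zero_lie_uB_two, zero_lie] at h02
  change ⁅⁅uB A k 0, uB A k 3⁆, uB A l r⁆ = _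
  rw [uB_zero_lie_uB_three, neg_lie, h12, h01]
  simp only [add_zero] at h02
  rw [sub_eq_zero.mp h02.symm]
  abel

theorem uH1_lie_uH_three_of_ne {k l : I} (hkl : k ≠ l) (h13 : ⁅uB A l 1, uB A l 3⁆ = 0)
    (h04 : ⁅uB A l 0, uB A l 4⁆ = 0) : ⁅uH1 A l, uH A k 3⁆ = 0 := by
  rw [← lie_skew, neg_eq_zero, ← uB_zero_lie_uB_one, leibniz_lie, uH_three_lie_uB_of_ne A hkl,
    uH_three_lie_uB_of_ne A hkl, UAlg.smul_lie, UAlg.lie_smul, ← lie_skew, h13, h04]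
  simp

theorem uH1_lie_uH_three_eq_zero_iff {m k : I} (hmk : A.al m k ≠ 0) :
    ⁅uH1 A m, uH A k 3⁆ = 0 ↔ ⁅uB A k 1, uB A k 3⁆ = 0 ∧ ⁅uB A k 0, uB A k 4⁆ = 0 := by
  have hlie_uH_three : ⁅uH1 A m, uH A k 3⁆
      = (2 * (A.al m k : ℂ)) • (⁅uB A k 1, uB A k 3⁆ + ⁅uB A k 0, uB A k 4⁆) :=
    (uH1_lie_lie_uB A m k k 0 3).trans (smul_add _ _ _).symm
  have hlie_b12 : ⁅uH1 A m, uH A k 3⁆ = -((2 * (A.al m k : ℂ)) • ⁅uB A k 1, uB A k 3⁆) := by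
    change ⁅uH1 A m, ⁅uB A k 0, uB A k 3⁆⁆ = _
    rw [uB_zero_lie_uB_three, lie_neg, uH1_lie_lie_uB, lie_self, smul_zero, zero_add]
  constructor
  · intro h
    have h13 : ⁅uB A k 1, uB A k 3⁆ = 0 :=
      (smul_eq_zero.mp (neg_eq_zero.mp (hlie_b12 ▸ h))).resolve_left (two_mul_al_ne_zero A hmk)
    rw [hlie_uH_three, h13, zero_add] at h
    exact ⟨h13, (smul_eq_zero.mp h).resolve_left (two_mul_al_ne_zero A hmk)⟩
  · rintro ⟨h13, h04⟩
    rw [hlie_uH_three, h13, h04, add_zero, smul_zero]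

end UAlg

theorem U_hi4_propagation_general
    {I : Type} [Fintype I] [DecidableEq I] (A : CartanData I)
    (i j : I) (h13 : ⁅uH A i 1, uH A i 3⁆ = 0) (hal : A.al i j ≠ 0) :
    ⁅uH A j 1, uH A j 3⁆ = 0 ∧ uH A j 4 = 0 ∧ ⁅uB A j 0, uB A j 4⁆ = 0 ∧
      ⁅uB A j 1, uB A j 3⁆ = 0 := by
  have hi := (uH1_lie_uH_three_eq_zero_iff A (A.al_self_pos i).ne').mp h13
  have hij : ⁅uH1 A i, uH A j 3⁆ = 0 := by
    rcases eq_or_ne i j with rfl | hne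
    · exact h13
    · exact uH1_lie_uH_three_of_ne A hne.symm hi.1 hi.2
  obtain ⟨hj13, hj04⟩ := (uH1_lie_uH_three_eq_zero_iff A hal).mp hij
  exact ⟨(uH1_lie_uH_three_eq_zero_iff A (A.al_self_pos j).ne').mpr ⟨hj13, hj04⟩,
    hj04, hj04, hj13⟩

/-- in `𝒰`, if `[h_{i,1}, h_{i,3}] = 0` and `(α_i,α_j) ≠ 0`, then
`[h_{j,1}, h_{j,3}] = 0`, `h_{j,4} = [b_{j,0}, b_{j,4}] = 0` and `[b_{j,1}, b_{j,3}] = 0`. -/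
theorem U_hi4_propagation
    {I : Type} [Fintype I] [DecidableEq I] [Nonempty I] (A : CartanData I)
    (i j : I) (h13 : ⁅uH A i 1, uH A i 3⁆ = 0) (hal : A.al i j ≠ 0) :
    ⁅uH A j 1, uH A j 3⁆ = 0 ∧ uH A j 4 = 0 ∧ ⁅uB A j 0, uB A j 4⁆ = 0 ∧
      ⁅uB A j 1, uB A j 3⁆ = 0 :=
  U_hi4_propagation_general A i j h13 hal
end
end

section
/- In 𝒰, if i ∈ I satisfies [h_{i,1}, h_{i,3}] = 0, then [h_{i,3}, b_{i,r}] = 2(α_i,α_i)·b_{i,r+3} for all r ∈ ℕ. -/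
noncomputable section

/-
Write `a = 2(α_i,α_i)`. Since `[h_{i,1}, b_{i,r}] = a b_{i,r+1}` for every `r` and
`[b_{i,0}, b_{i,1}] = h_{i,1}`, the Jacobi identity gives `[b_{i,0}, b_{i,2}] = 0` and then
`h_{i,3} = [b_{i,2}, b_{i,1}]`, whence `[h_{i,3}, b_{i,0}] = a b_{i,3}`. Once `h_{i,3}` commutes
with `h_{i,1}`, applying `ad h_{i,1}` to this base case propagates it to every `r`.
-/

section ShiftedSequence

variable {K L : Type*} [Field K] [LieRing L] [LieAlgebra K L] {a : K} {h : L} {b : ℕ → L}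

variable (ha : a ≠ 0) (hb : ∀ r, ⁅h, b r⁆ = a • b (r + 1)) (h01 : ⁅b 0, b 1⁆ = h)
include ha hb h01

theorem lie_b0_b2_eq_zero : ⁅b 0, b 2⁆ = 0 := by
  have hb0 : ⁅b 0, h⁆ = -(a • b 1) := by rw [← lie_skew, hb]
  have : a • ⁅b 0, b 2⁆ = 0 := by
    rw [← lie_smul, ← hb 1, leibniz_lie, hb0, h01]
    simp
  exact (smul_eq_zero.mp this).resolve_left ha

theorem lie_b0_b3_eq_lie_b2_b1 : ⁅b 0, b 3⁆ = ⁅b 2, b 1⁆ := by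
  have hb0 : ⁅b 0, h⁆ = -(a • b 1) := by rw [← lie_skew, hb]
  apply smul_right_injective L ha
  dsimp only
  rw [← lie_smul, ← hb 2, leibniz_lie, hb0, lie_b0_b2_eq_zero ha hb h01, lie_zero, add_zero,
    neg_lie, smul_lie, ← smul_neg, lie_skew]

theorem lie_lie_b0_b3_b0 : ⁅⁅b 0, b 3⁆, b 0⁆ = a • b 3 := by
  have h10 : ⁅b 1, b 0⁆ = -h := by rw [← lie_skew, h01]
  have h20 : ⁅b 2, b 0⁆ = 0 := by rw [← lie_skew, lie_b0_b2_eq_zero ha hb h01, neg_zero]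
  rw [lie_b0_b3_eq_lie_b2_b1 ha hb h01, lie_lie, h10, h20, lie_zero, sub_zero, lie_neg, lie_skew, hb]

theorem lie_lie_b0_b3_eq_smul (hc : ⁅h, ⁅b 0, b 3⁆⁆ = 0) (r : ℕ) :
    ⁅⁅b 0, b 3⁆, b r⁆ = a • b (r + 3) := by
  have hch : ⁅⁅b 0, b 3⁆, h⁆ = 0 := by rw [← lie_skew, hc, neg_zero]
  induction r with
  | zero => exact lie_lie_b0_b3_b0 ha hb h01
  | succ r ih =>
    apply smul_right_injective L ha
    dsimp only
    rw [← lie_smul, ← hb r, leibniz_lie, hch, zero_lie, zero_add, ih, lie_smul, hb]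

end ShiftedSequence

theorem CartanData.two_mul_al_self_ne_zero_s18 {I : Type} [Fintype I] (A : CartanData I) (i : I) :
    (2 * (A.al i i : ℂ)) ≠ 0 := by
  have hal : A.al i i = 2 * A.d i := by simp [CartanData.al, A.c_diag i, mul_comm]
  have hd : A.d i ≠ 0 := (A.d_pos i).ne'
  rw [hal]
  exact_mod_cast mul_ne_zero two_ne_zero (mul_ne_zero two_ne_zero hd)

theorem map_ring_bracket {F R S : Type*} [Ring R] [Ring S] [FunLike F R S] [RingHomClass F R S]
    (f : F) (x y : R) : f ⁅x, y⁆ = ⁅f x, f y⁆ := by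
  simp only [Ring.lie_def, map_sub, map_mul]

section UAlg

attribute [local instance] LieRing.ofAssociativeRing

variable {I : Type} [Fintype I] [DecidableEq I] (A : CartanData I) (i : I)

theorem lie_uH1_uB (r : ℕ) : ⁅uH1 A i, uB A i r⁆ = (2 * (A.al i i : ℂ)) • uB A i (r + 1) := by
  cases r with
  | zero =>
    have h := RingQuot.mkAlgHom_rel ℂ (URel.hb (A := A) i i)
    rw [map_ring_bracket, map_smul] at h
    exact h
  | succ r =>
    rw [uB, smul_smul, mul_inv_cancel₀ (A.two_mul_al_self_ne_zero_s18 i), one_smul]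

theorem lie_uB0_uB1 : ⁅uB0 A i, uB1 A i⁆ = uH1 A i := by
  have h := RingQuot.mkAlgHom_rel ℂ (URel.bb (A := A) i i)
  simp only [map_ring_bracket, map_sub, map_smul] at h
  change ⁅uB1 A i, uB0 A i⁆ = ⁅uB0 A i, uB1 A i⁆ - (2 : ℂ) • uH1 A i at h
  rw [← lie_skew] at h
  apply smul_right_injective _ (two_ne_zero : (2 : ℂ) ≠ 0)
  linear_combination (norm := module) -h

end UAlg

theorem U_h3_b_same_index_general
    {I : Type} [Fintype I] [DecidableEq I] (A : CartanData I)
    (i : I) (h13 : ⁅uH A i 1, uH A i 3⁆ = 0) (r : ℕ) :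
    ⁅uH A i 3, uB A i r⁆ = (2 * (A.al i i : ℂ)) • uB A i (r + 3) := by
  let _ : LieRing (UAlg A) := LieRing.ofAssociativeRing
  exact lie_lie_b0_b3_eq_smul (A.two_mul_al_self_ne_zero_s18 i) (lie_uH1_uB A i) (lie_uB0_uB1 A i)
    h13 r

/-- in `𝒰`, if `[h_{i,1}, h_{i,3}] = 0` then
`[h_{i,3}, b_{i,r}] = 2(α_i,α_i) b_{i,r+3}` for all `r`. -/
theorem U_h3_b_same_index
    {I : Type} [Fintype I] [DecidableEq I] [Nonempty I] (A : CartanData I)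
    (i : I) (h13 : ⁅uH A i 1, uH A i 3⁆ = 0) (r : ℕ) :
    ⁅uH A i 3, uB A i r⁆ = (2 * (A.al i i : ℂ)) • uB A i (r + 3) :=
  U_h3_b_same_index_general A i h13 r
end
end
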